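/- arXiv:1908.02497 — 3 statements merged into one kernel-verified Lean document; each statement's English description precedes it below -/
import Mathlib

section
/- For each k ∈ {0,…,7}, the matrix G_k = [[3+2√2+(2+2√2)cos(kπ/2), (2+2√2)sin(kπ/2), (2+2√2)^{3/2}cos(kπ/4)], [(2+2√2)sin(kπ/2), 3+2√2−(2+2√2)cos(kπ/2), (2+2√2)^{3/2}sin(kπ/4)], [(2+2√2)^{3/2}cos(kπ/4), (2+2√2)^{3/2}sin(kπ/4), 5+4√2]] satisfies G_kᵀ J G_k = J with J = diag(1,1,−1); hence the induced projective transformation preserves the unit circle. -/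
set_option maxHeartbeats 1000000 in
/-- each Klein-disk Bolza generator matrix `G_k` satisfies
`G_kᵀ J G_k = J` with `J = diag(1,1,−1)`. -/
theorem bolza_generators_klein_in_O21 (k : Fin 8) :
    let c : ℝ := 2 + 2 * Real.sqrt 2
    let G : Matrix (Fin 3) (Fin 3) ℝ :=
      Matrix.of ![![3 + 2 * Real.sqrt 2 + c * Real.cos (k * Real.pi / 2),
                    c * Real.sin (k * Real.pi / 2),
                    c ^ ((3 : ℝ) / 2) * Real.cos (k * Real.pi / 4)],
                  ![c * Real.sin (k * Real.pi / 2),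
                    3 + 2 * Real.sqrt 2 - c * Real.cos (k * Real.pi / 2),
                    c ^ ((3 : ℝ) / 2) * Real.sin (k * Real.pi / 4)],
                  ![c ^ ((3 : ℝ) / 2) * Real.cos (k * Real.pi / 4),
                    c ^ ((3 : ℝ) / 2) * Real.sin (k * Real.pi / 4),
                    5 + 4 * Real.sqrt 2]]
    let J : Matrix (Fin 3) (Fin 3) ℝ := Matrix.diagonal ![1, 1, -1]
    G.transpose * J * G = J := by
  intro c G J
  have hsqrt : (0:ℝ) ≤ Real.sqrt 2 := Real.sqrt_nonneg 2
  have hcpos : (0:ℝ) < 2 + 2 * Real.sqrt 2 := by linarith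
  have hs : Real.sqrt 2 ^ 2 = 2 := Real.sq_sqrt (by norm_num)
  have hd : (2 + 2 * Real.sqrt 2) ^ ((3:ℝ)/2) * (2 + 2 * Real.sqrt 2) ^ ((3:ℝ)/2)
      = (2 + 2 * Real.sqrt 2) * (2 + 2 * Real.sqrt 2) * (2 + 2 * Real.sqrt 2) := by
    rw [← Real.rpow_add hcpos]
    norm_num
    ring
  have h2 : (k:ℝ) * Real.pi / 2 = 2 * ((k:ℝ) * Real.pi / 4) := by ring
  have hpy := Real.sin_sq_add_cos_sq ((k:ℝ) * Real.pi / 4)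
  have hcos2 := Real.cos_two_mul ((k:ℝ) * Real.pi / 4)
  have hsin2 := Real.sin_two_mul ((k:ℝ) * Real.pi / 4)
  unfold G J c
  set s := Real.sqrt 2 with hsdef
  set u := Real.cos ((k:ℝ) * Real.pi / 4) with hudef
  set v := Real.sin ((k:ℝ) * Real.pi / 4) with hvdef
  set d := (2 + 2 * s) ^ ((3:ℝ)/2) with hddef
  ext i j
  fin_cases i <;> fin_cases j <;>
    simp [Matrix.mul_apply, Fin.sum_univ_succ, Matrix.diagonal, h2, hcos2, hsin2]
  all_goals first
    | ring1
    | linear_combination (-(8+8*s)*u^2) * hs + (4*(2+2*s)^2*u^2) * hpy + (-u^2) * hd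
    | linear_combination (-(8+8*s)*u*v) * hs + (-(u*v)) * hd
    | linear_combination (2*(2+2*s)*d*u) * hpy
    | linear_combination (16-16*u^2-(24+8*s)*v^2) * hs + (4*(2+2*s)^2*u^2-(56+40*s)) * hpy + (-v^2) * hd
    | linear_combination ((8+8*s)) * hs + ((2+2*s)^3) * hpy + (u^2+v^2) * hd
end

section
/- Let Δ₁ and Δ₂ be two open regions in ℝ² whose closures share a boundary piece lying in the zero set of an irreducible polynomial ℓ(x,y) of degree 1 (a line), and let p₁, p₂ be polynomials. If p₁ − p₂ = ℓ^{r+1}·q for some polynomial q, then the piecewise function equal to p₁ on Δ₁ and p₂ on Δ₂ extends to a C^r function on a neighborhood of any point of the common edge in the interior of the line segment. -/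
/-!
On the side `ℓ ≥ 0` the piecewise function is `p₂ + ℓ^(r+1) q`, and on the side `ℓ < 0` it
is `p₂`, so it equals `p₂ + (max ℓ 0)^(r+1) q` everywhere. The truncated power
`t ↦ (max t 0)^(r+1)` is `C^r` (its derivative is a multiple of the truncated power of one
degree less), and composing it with the affine `ℓ` and multiplying by `q` preserves `C^r`.
-/

open MvPolynomial

lemma hasDerivAt_max_zero_pow (n : ℕ) (t : ℝ) :
    HasDerivAt (fun s : ℝ => max s 0 ^ (n + 2)) ((n + 2) * max t 0 ^ (n + 1)) t := by
  rcases lt_trichotomy t 0 with ht | rfl | ht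
  · rw [max_eq_right ht.le, zero_pow n.succ_ne_zero, mul_zero]
    refine (hasDerivAt_const t (0 : ℝ)).congr_of_eventuallyEq ?_
    filter_upwards [Iio_mem_nhds ht] with s hs
    rw [max_eq_right hs.le, zero_pow (by omega)]
  · simp only [max_self, zero_pow n.succ_ne_zero, mul_zero]
    rw [hasDerivAt_iff_isLittleO]
    simp only [sub_zero, smul_zero, max_self, zero_pow (by omega : n + 2 ≠ 0)]
    have hbound : (fun s : ℝ => max s 0 ^ (n + 2)) =O[nhds 0] fun s => s ^ (n + 2) := by
      refine Asymptotics.IsBigO.of_bound 1 (Filter.Eventually.of_forall fun s => ?_)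
      simp only [one_mul, norm_pow, Real.norm_eq_abs]
      exact pow_le_pow_left₀ (abs_nonneg _) (abs_max_le_max_abs_abs.trans (by simp)) _
    exact hbound.trans_isLittleO (Asymptotics.isLittleO_pow_id (by omega))
  · rw [max_eq_left ht.le]
    have hpow := hasDerivAt_pow (n + 2) t
    push_cast at hpow
    refine hpow.congr_of_eventuallyEq ?_
    filter_upwards [Ioi_mem_nhds ht] with s hs
    rw [max_eq_left hs.le]

lemma contDiff_max_zero_pow (n : ℕ) :
    ContDiff ℝ n (fun t : ℝ => max t 0 ^ (n + 1)) := by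
  induction n with
  | zero => exact contDiff_zero.2 ((continuous_id.max continuous_const).pow 1)
  | succ n ih =>
    have hderiv : deriv (fun s : ℝ => max s 0 ^ (n + 2)) =
        fun t : ℝ => (n + 2) * max t 0 ^ (n + 1) :=
      funext fun t => (hasDerivAt_max_zero_pow n t).deriv
    rw [Nat.cast_succ, contDiff_succ_iff_deriv, hderiv]
    exact ⟨fun t => (hasDerivAt_max_zero_pow n t).differentiableAt, by simp,
      contDiff_const.mul ih⟩

lemma MvPolynomial.contDiff_eval {𝕜 E σ : Type*} [NontriviallyNormedField 𝕜]
    [NormedAddCommGroup E] [NormedSpace 𝕜 E] {n : WithTop ℕ∞} {f : E → σ → 𝕜}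
    (hf : ∀ i, ContDiff 𝕜 n fun x => f x i) (p : MvPolynomial σ 𝕜) :
    ContDiff 𝕜 n fun x => eval (f x) p := by
  induction p using MvPolynomial.induction_on with
  | C a => simpa using contDiff_const
  | add p q hp hq => simpa using hp.add hq
  | mul_X p i hp => simpa using hp.mul (hf i)

lemma ite_nonneg_eq_add_max_pow {l a b c : ℝ} (k : ℕ) (h : a - b = l ^ (k + 1) * c) :
    (if 0 ≤ l then a else b) = b + max l 0 ^ (k + 1) * c := by
  split_ifs with hl
  · rw [max_eq_left hl, ← h]
    ring
  · rw [max_eq_right (not_le.1 hl).le, zero_pow k.succ_ne_zero, zero_mul, add_zero]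

theorem spline_smooth_cofactor_if_general (α β γ : ℝ) (r : ℕ)
    (p₁ p₂ q : MvPolynomial (Fin 2) ℝ)
    (hℓ : p₁ - p₂ = (C α * X 0 + C β * X 1 + C γ) ^ (r + 1) * q) :
    ContDiff ℝ (r : ℕ∞)
      (fun x : ℝ × ℝ =>
        if 0 ≤ α * x.1 + β * x.2 + γ then eval ![x.1, x.2] p₁ else eval ![x.1, x.2] p₂) := by
  have hcoord : ∀ i, ContDiff ℝ r fun x : ℝ × ℝ => ![x.1, x.2] i := by
    intro i
    fin_cases i
    · exact contDiff_fst
    · exact contDiff_snd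
  have hline : ContDiff ℝ r fun x : ℝ × ℝ => α * x.1 + β * x.2 + γ :=
    ((contDiff_const.mul contDiff_fst).add (contDiff_const.mul contDiff_snd)).add contDiff_const
  have hdiff (x : ℝ × ℝ) : eval ![x.1, x.2] p₁ - eval ![x.1, x.2] p₂ =
      (α * x.1 + β * x.2 + γ) ^ (r + 1) * eval ![x.1, x.2] q := by
    simpa using congrArg (eval ![x.1, x.2]) hℓ
  rw [funext fun x => ite_nonneg_eq_add_max_pow r (hdiff x)]
  exact (contDiff_eval hcoord p₂).add
    (((contDiff_max_zero_pow r).comp hline).mul (contDiff_eval hcoord q))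

/-- 'if' direction of the smooth cofactor criterion: if two polynomial
pieces differ by `ℓ^(r+1) q` across the line `ℓ = αx + βy + γ = 0`, then the piecewise
function is `C^r` (in particular near every point of the common edge). -/
theorem spline_smooth_cofactor_if (α β γ : ℝ) (hαβ : (α, β) ≠ (0, 0)) (r : ℕ)
    (p₁ p₂ q : MvPolynomial (Fin 2) ℝ)
    (hℓ : p₁ - p₂ = (C α * X 0 + C β * X 1 + C γ) ^ (r + 1) * q) :
    ContDiff ℝ (r : ℕ∞)
      (fun x : ℝ × ℝ =>
        if 0 ≤ α * x.1 + β * x.2 + γ then eval ![x.1, x.2] p₁ else eval ![x.1, x.2] p₂) :=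
  spline_smooth_cofactor_if_general α β γ r p₁ p₂ q hℓ
end

section
/- Let ℓ(x,y) = αx + βy + γ with (α,β) ≠ (0,0), and let p be a polynomial in two variables. If p and all its partial derivatives up to order r vanish on the line {ℓ = 0}, then ℓ^{r+1} divides p in ℝ[x,y]. -/
open MvPolynomial

private lemma contDiff_eval_poly (p : MvPolynomial (Fin 2) ℝ) :
    ContDiff ℝ ⊤ (fun y : ℝ × ℝ => eval ![y.1, y.2] p) := by
  induction p using MvPolynomial.induction_on with
  | C a => simpa using contDiff_const
  | add p q hp hq => simpa [map_add] using hp.add hq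
  | mul_X p i hp =>
      have hx : ContDiff ℝ ⊤ (fun y : ℝ × ℝ => (![y.1, y.2] : Fin 2 → ℝ) i) := by
        fin_cases i
        · simpa using contDiff_fst
        · simpa using contDiff_snd
      simpa [map_mul] using hp.mul hx

private lemma iteratedFDeriv_shift {E F : Type*} [NormedAddCommGroup E] [NormedSpace ℝ E]
    [NormedAddCommGroup F] [NormedSpace ℝ F] {f : E → F} (hf : ContDiff ℝ ⊤ f) (c : E) :
    ∀ (n : ℕ) (x : E), iteratedFDeriv ℝ n (fun y => f (c + y)) x = iteratedFDeriv ℝ n f (c + x) := by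
  intro n
  induction n with
  | zero => intro x; ext m; simp [iteratedFDeriv_zero_apply]
  | succ n ih =>
      intro x
      ext m
      rw [iteratedFDeriv_succ_apply_left, iteratedFDeriv_succ_apply_left]
      have hfun : (iteratedFDeriv ℝ n fun y => f (c + y)) = fun y => iteratedFDeriv ℝ n f (c + y) :=
        funext ih
      have hdiff : DifferentiableAt ℝ (iteratedFDeriv ℝ n f) (c + x) :=
        (hf.differentiable_iteratedFDeriv (by exact_mod_cast lt_top_iff_ne_top.2 (by simp))) _
      have h1 : HasFDerivAt (fun y : E => c + y) (ContinuousLinearMap.id ℝ E) x := by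
        simpa using (hasFDerivAt_id x).const_add c
      have h3 : HasFDerivAt (fun y => iteratedFDeriv ℝ n f (c + y))
          ((fderiv ℝ (iteratedFDeriv ℝ n f) (c + x)).comp (ContinuousLinearMap.id ℝ E)) x :=
        hdiff.hasFDerivAt.comp x h1
      rw [hfun, h3.fderiv]
      simp

private lemma iteratedDeriv_polyEval (k : ℕ) (P : Polynomial ℝ) (x : ℝ) :
    iteratedDeriv k (fun u => Polynomial.eval u P) x
      = Polynomial.eval x (Polynomial.derivative^[k] P) := by
  induction k generalizing P with
  | zero => simp
  | succ k ih =>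
      rw [iteratedDeriv_succ']
      have h : deriv (fun u => Polynomial.eval u P)
          = fun u => Polynomial.eval u (Polynomial.derivative P) :=
        funext fun u => Polynomial.deriv (p := P)
      rw [h, ih, Function.iterate_succ_apply]

private lemma maux_aeval_eq_eval (x : Fin 2 → ℝ) (p : MvPolynomial (Fin 2) ℝ) :
    aeval x p = eval x p := by
  rw [aeval_def, Algebra.algebraMap_self]; rfl

/-- 'only if' direction of the smooth cofactor criterion: if a bivariate
polynomial `p` vanishes on the line `αx + βy + γ = 0` together with all its derivatives
up to order `r`, then `(αx + βy + γ)^(r+1)` divides `p`. -/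
theorem spline_smooth_cofactor_only_if (α β γ : ℝ) (hαβ : (α, β) ≠ (0, 0)) (r : ℕ)
    (p : MvPolynomial (Fin 2) ℝ)
    (hvanish : ∀ j : ℕ, j ≤ r → ∀ x : ℝ × ℝ, α * x.1 + β * x.2 + γ = 0 →
      iteratedFDeriv ℝ j (fun y : ℝ × ℝ => eval ![y.1, y.2] p) x = 0) :
    (C α * X 0 + C β * X 1 + C γ) ^ (r + 1) ∣ p := by
  set f : ℝ × ℝ → ℝ := fun y => eval ![y.1, y.2] p with hf_def
  set N : ℝ := α ^ 2 + β ^ 2 with hNdef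
  have hN : N ≠ 0 := by
    intro h
    apply hαβ
    have hα : α = 0 := by nlinarith [sq_nonneg α, sq_nonneg β]
    have hβ : β = 0 := by nlinarith [sq_nonneg α, sq_nonneg β]
    simp [hα, hβ]
  set g : Fin 2 → MvPolynomial (Fin 2) ℝ :=
    ![C N⁻¹ * C α * (X 0 - C γ) - C β * X 1,
      C N⁻¹ * C β * (X 0 - C γ) + C α * X 1] with hg
  set q : MvPolynomial (Fin 2) ℝ := aeval g p with hq
  set L : MvPolynomial (Fin 2) ℝ := C α * X 0 + C β * X 1 + C γ with hL
  set φ : MvPolynomial (Fin 2) ℝ →ₐ[ℝ] MvPolynomial (Fin 2) ℝ :=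
    aeval ![L, C N⁻¹ * (C (-β) * X 0 + C α * X 1)] with hφ
  have hCN' : ((C α * C α + C β * C β) * C N⁻¹ : MvPolynomial (Fin 2) ℝ) = 1 := by
    rw [← map_mul, ← map_mul, ← map_add, ← map_mul, hNdef]
    rw [show (α * α + β * β) * (α ^ 2 + β ^ 2)⁻¹ = (α ^ 2 + β ^ 2) * (α ^ 2 + β ^ 2)⁻¹ by ring,
      mul_inv_cancel₀ (by rw [hNdef] at hN; exact hN), map_one]
  have hφq : φ q = p := by
    have hcomp : φ (aeval g p) = aeval (fun i => φ (g i)) p := by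
      rw [← comp_aeval]; rfl
    rw [hq, hcomp]
    have hgi : (fun i => φ (g i)) = X := by
      funext i
      fin_cases i
      · show φ (g 0) = X 0
        simp only [hg, hφ, hL, Matrix.cons_val_zero, Matrix.cons_val_one, Matrix.head_cons,
          map_sub, map_add, map_mul, map_neg, aeval_X, aeval_C, algebraMap_eq]
        linear_combination (X 0 : MvPolynomial (Fin 2) ℝ) * hCN'
      · show φ (g 1) = X 1
        simp only [hg, hφ, hL, Matrix.cons_val_zero, Matrix.cons_val_one, Matrix.head_cons,
          map_sub, map_add, map_mul, map_neg, aeval_X, aeval_C, algebraMap_eq]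
        linear_combination (X 1 : MvPolynomial (Fin 2) ℝ) * hCN'
    rw [hgi, aeval_X_left_apply]
  have heval : ∀ u t : ℝ, eval ![u, t] q
      = f (α * (u - γ) / N - β * t, β * (u - γ) / N + α * t) := by
    intro u t
    have hcomp : aeval (![u, t] : Fin 2 → ℝ) (aeval g p)
        = aeval (fun i => aeval (![u, t] : Fin 2 → ℝ) (g i)) p := by
      rw [← comp_aeval]; rfl
    rw [hq, ← maux_aeval_eq_eval, hcomp, hf_def]
    show _ = eval ![(α * (u - γ) / N - β * t, β * (u - γ) / N + α * t).1,
      (α * (u - γ) / N - β * t, β * (u - γ) / N + α * t).2] p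
    rw [← maux_aeval_eq_eval]
    have harg : (fun i => aeval (![u, t] : Fin 2 → ℝ) (g i))
        = ![(α * (u - γ) / N - β * t, β * (u - γ) / N + α * t).1,
            (α * (u - γ) / N - β * t, β * (u - γ) / N + α * t).2] := by
      funext i
      fin_cases i
      · show aeval (![u, t] : Fin 2 → ℝ) (g 0) = α * (u - γ) / N - β * t
        simp only [hg, Matrix.cons_val_zero, Matrix.cons_val_one, Matrix.head_cons, map_sub,
          map_mul, map_add, aeval_X, aeval_C, Algebra.algebraMap_self, RingHom.id_apply]
        ring
      · show aeval (![u, t] : Fin 2 → ℝ) (g 1) = β * (u - γ) / N + α * t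
        simp only [hg, Matrix.cons_val_zero, Matrix.cons_val_one, Matrix.head_cons, map_sub,
          map_mul, map_add, aeval_X, aeval_C, Algebra.algebraMap_self, RingHom.id_apply]
        ring
    rw [harg]
  have hf : ContDiff ℝ ⊤ f := contDiff_eval_poly p
  set Q : Polynomial (MvPolynomial (Fin 1) ℝ) := finSuccEquiv ℝ 1 q with hQ
  have hQcoeff : ∀ k, k ≤ r → Q.coeff k = 0 := by
    intro k hk
    have hev : ∀ x : Fin 1 → ℝ, eval x (Q.coeff k) = eval x 0 := by
      intro x
      set t : ℝ := x 0 with ht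
      set Pt : Polynomial ℝ := Q.map (eval x) with hPt
      set c : ℝ × ℝ := (α * (0 - γ) / N - β * t, β * (0 - γ) / N + α * t) with hc
      have hcline : α * c.1 + β * c.2 + γ = 0 := by
        rw [hc]
        field_simp
        ring
      set v : ℝ × ℝ := (α / N, β / N) with hv
      have hhh : ∀ u : ℝ, f (c + u • v) = Polynomial.eval u Pt := by
        intro u
        have e1 : c + u • v = (α * (u - γ) / N - β * t, β * (u - γ) / N + α * t) := by
          rw [hc, hv, Prod.ext_iff]
          constructor
          · show α * (0 - γ) / N - β * t + u * (α / N) = _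
            ring
          · show β * (0 - γ) / N + α * t + u * (β / N) = _
            ring
        rw [e1, ← heval u t]
        have e2 : (![u, t] : Fin 2 → ℝ) = Fin.cons u x := by
          funext i
          refine Fin.cases rfl (fun j => ?_) i
          have hj : j = 0 := Subsingleton.elim _ _
          rw [hj]
          rfl
        rw [e2, eval_eq_eval_mv_eval', ← hQ, ← hPt]
      have hzero : iteratedDeriv k (fun u : ℝ => f (c + u • v)) 0 = 0 := by
        set Lm : ℝ →L[ℝ] ℝ × ℝ :=
          ContinuousLinearMap.smulRight (ContinuousLinearMap.id ℝ ℝ) v with hLm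
        have hf1 : ContDiff ℝ ⊤ (fun y => f (c + y)) :=
          hf.comp (contDiff_const.add contDiff_id)
        have hc1 : iteratedFDeriv ℝ k ((fun y => f (c + y)) ∘ Lm) 0 = 0 := by
          rw [Lm.iteratedFDeriv_comp_right hf1 0 le_top]
          have hz : iteratedFDeriv ℝ k (fun y => f (c + y)) (Lm 0) = 0 := by
            rw [show (Lm 0 : ℝ × ℝ) = 0 by simp, iteratedFDeriv_shift hf c k 0, add_zero]
            exact hvanish k hk c hcline
          rw [hz]
          ext m
          simp
        have hfun : (fun u : ℝ => f (c + u • v)) = (fun y => f (c + y)) ∘ Lm := by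
          funext u
          simp [hLm, Function.comp]
        rw [hfun, iteratedDeriv_eq_iteratedFDeriv, hc1]
        rfl
      have h1 : Polynomial.eval (0 : ℝ) (Polynomial.derivative^[k] Pt) = 0 := by
        rw [← iteratedDeriv_polyEval]
        rw [show (fun u => Polynomial.eval u Pt) = fun u : ℝ => f (c + u • v) from
          funext fun u => (hhh u).symm]
        exact hzero
      rw [← Polynomial.coeff_zero_eq_eval_zero, Polynomial.coeff_iterate_derivative,
        zero_add, Nat.descFactorial_self, nsmul_eq_mul] at h1
      have h2 : Pt.coeff k = 0 := by
        have hk0 : ((Nat.factorial k : ℕ) : ℝ) ≠ 0 := Nat.cast_ne_zero.2 (Nat.factorial_ne_zero k)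
        exact (mul_eq_zero.1 h1).resolve_left hk0
      rw [hPt, Polynomial.coeff_map] at h2
      simpa using h2
    exact MvPolynomial.funext hev
  have hdvdQ : Polynomial.X ^ (r + 1) ∣ Q :=
    Polynomial.X_pow_dvd_iff.2 fun d hd => hQcoeff d (Nat.lt_succ_iff.1 hd)
  have hdvdq : (X 0 : MvPolynomial (Fin 2) ℝ) ^ (r + 1) ∣ q := by
    have hmap := map_dvd (finSuccEquiv ℝ 1).symm hdvdQ
    have hXsymm : (finSuccEquiv ℝ 1).symm Polynomial.X = (X 0 : MvPolynomial (Fin 2) ℝ) := by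
      rw [← finSuccEquiv_X_zero (R := ℝ) (n := 1), AlgEquiv.symm_apply_apply]
    rwa [map_pow, hXsymm, hQ, AlgEquiv.symm_apply_apply] at hmap
  have hfinal := map_dvd φ hdvdq
  have hφX : φ (X 0) = L := by
    rw [hφ, aeval_X]
    rfl
  rwa [map_pow, hφX, hφq] at hfinal
end
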